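/- arXiv:1404.7380 — 2 statements merged into one kernel-verified Lean document; each statement's English description precedes it below -/
import Mathlib

section
/- In a finite Coxeter group W, any closed loop in the graph G(w) of reduced words of w (edges labeled by braid relations) contains an even number of edges corresponding to even braid relations m_{ij} (i.e., with m_{ij} even). -/
/-!
Send a word `b₁ ⋯ bᵣ` to the product `e_{b₁} ⋯ e_{bᵣ}` in the real Clifford algebra of the Tits
form `B(eᵢ, eⱼ) = -cos (π / mᵢⱼ)`. There `eᵢ² = 1` and `x = eᵢ eⱼ` satisfies
`x² = 2 B(eᵢ, eⱼ) x - 1`, so the powers of `x` are given by Chebyshev polynomials of the second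
kind, and evaluating them at `-cos (π / m)` gives `(eᵢ eⱼ) ^ mᵢⱼ = (-1) ^ (mᵢⱼ + 1)`. Hence a braid
move of length `m` multiplies the image of a word by `(-1) ^ (m + 1)`, flipping its sign exactly
when `m` is even. Around a loop the image, an invertible element, comes back to itself, so the
number of sign flips is even.

A braid move with `mᵢⱼ = ∞` would be an empty edge counted as even; finiteness of `W` rules it out.
Since every `(e_k e_l) ^ m_kl` is a scalar, `sᵢ ↦ eᵢ` lifts `W` to the Clifford units modulo their
centre, so if `sᵢ sⱼ` has order `d` then `(eᵢ eⱼ) ^ d` commutes with `eᵢ`. But for `B(eᵢ, eⱼ) = -1`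
that commutator is `U_{d-1}(-1) = ±d` times the commutator of `eᵢ` with `eᵢ eⱼ`, which is nonzero.
-/

open CoxeterSystem Polynomial.Chebyshev Real

section Chebyshev

variable {R A : Type*} [CommRing R] [Ring A] [Algebra R A]

theorem pow_succ_eq_of_mul_self_eq {x : A} {c : R} (hx : x * x = (2 * c) • x - 1) (n : ℕ) :
    x ^ (n + 1) = (U R n).eval c • x - (U R (n - 1 : ℤ)).eval c • (1 : A) := by
  induction n with
  | zero => simp
  | succ n ih =>
    have hU : (U R ((n + 1 : ℕ) : ℤ)).eval c =
        2 * c * (U R n).eval c - (U R (n - 1 : ℤ)).eval c := by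
      push_cast
      simp [U_add_one]
    rw [pow_succ, ih, sub_mul, smul_mul_assoc, smul_mul_assoc, hx, one_mul, hU]
    push_cast
    simp only [add_sub_cancel_right]
    module

theorem mul_pow_succ_sub_pow_succ_mul_of_mul_self_eq {x : A} {c : R}
    (hx : x * x = (2 * c) • x - 1) (y : A) (n : ℕ) :
    y * x ^ (n + 1) - x ^ (n + 1) * y = (U R n).eval c • (y * x - x * y) := by
  rw [pow_succ_eq_of_mul_self_eq hx]
  simp only [mul_sub, sub_mul, mul_smul_comm, smul_mul_assoc, mul_one, one_mul]
  module

theorem Polynomial.Chebyshev.U_eval_neg_cos_pi_div (k : ℕ) :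
    (U ℝ (k + 1 : ℕ)).eval (-cos (π / (k + 2 : ℕ))) = 0 ∧
      (U ℝ k).eval (-cos (π / (k + 2 : ℕ))) = (-1) ^ k := by
  set θ := π / (k + 2 : ℕ)
  have hsin : sin θ ≠ 0 := by
    apply (sin_pos_of_pos_of_lt_pi (by positivity) _).ne'
    exact div_lt_self pi_pos (by norm_cast; omega)
  have hkθ : ((k : ℝ) + 2) * θ = π := by
    simp only [θ]
    push_cast
    field_simp
  have hU₁ : (U ℝ (k + 1 : ℕ)).eval (cos θ) = 0 := by
    have h := U_real_cos θ ((k + 1 : ℕ) : ℤ)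
    rw [show (((k + 1 : ℕ) : ℤ) : ℝ) + 1 = k + 2 by push_cast; ring, hkθ, sin_pi] at h
    exact (mul_eq_zero.1 h).resolve_right hsin
  have hU₀ : (U ℝ k).eval (cos θ) = 1 := by
    have h := U_real_cos θ k
    rw [Int.cast_natCast, show ((k : ℝ) + 1) * θ = π - θ by linarith, sin_pi_sub] at h
    exact (mul_eq_right₀ hsin).1 h
  rw [U_eval_neg, U_eval_neg, hU₁, hU₀]
  simp

end Chebyshev

theorem pow_eq_neg_one_pow_of_mul_self_eq {A : Type*} [Ring A] [Algebra ℝ A] {x : A} {m : ℕ}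
    (hm : 2 ≤ m) (hx : x * x = (2 * -cos (π / m)) • x - 1) :
    x ^ m = algebraMap ℝ A ((-1) ^ (m + 1)) := by
  obtain ⟨k, rfl⟩ : ∃ k, m = k + 2 := ⟨m - 2, by omega⟩
  obtain ⟨hU₁, hU₀⟩ := U_eval_neg_cos_pi_div k
  rw [pow_succ_eq_of_mul_self_eq hx, show (((k + 1 : ℕ) : ℤ) - 1) = k by push_cast; ring, hU₁, hU₀,
    Algebra.algebraMap_eq_smul_one]
  module

namespace CoxeterSystem

variable {B A : Type*}

theorem prod_map_alternatingWord_two_mul [Monoid A] (f : B → A) (i j : B) (t : ℕ) :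
    ((alternatingWord i j (2 * t)).map f).prod = (f i * f j) ^ t := by
  induction t with
  | zero => simp [alternatingWord]
  | succ t ih =>
    rw [show 2 * (t + 1) = 2 * t + 1 + 1 by ring, alternatingWord_succ, alternatingWord_succ]
    simp [ih, pow_succ]

theorem prod_map_alternatingWord_two_mul_add_one [Monoid A] (f : B → A) (i j : B) (t : ℕ) :
    ((alternatingWord i j (2 * t + 1)).map f).prod = f j * (f i * f j) ^ t := by
  rw [alternatingWord_succ, List.concat_eq_append, List.map_append, List.prod_append,
    prod_map_alternatingWord_two_mul]
  simp [mul_pow_mul]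

theorem prod_map_alternatingWord_eq_smul {R : Type*} [CommSemiring R] [Semiring A] [Algebra R A]
    {f : B → A} {i j : B} (hi : f i * f i = 1) (hj : f j * f j = 1) {m : ℕ} {z : R}
    (hz : (f i * f j) ^ m = algebraMap R A z) :
    ((alternatingWord i j m).map f).prod = z • ((alternatingWord j i m).map f).prod := by
  have hinv : ∀ t : ℕ, (f i * f j) ^ t * (f j * f i) ^ t = 1 := by
    intro t
    have h : (f i * f j) * (f j * f i) = 1 := by rw [mul_assoc, ← mul_assoc (f j), hj, one_mul, hi]
    have h' : (f j * f i) * (f i * f j) = 1 := by rw [mul_assoc, ← mul_assoc (f i), hi, one_mul, hj]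
    rw [← (Commute.mul_pow (h.trans h'.symm) t), h, one_pow]
  rw [Algebra.smul_def]
  obtain ⟨t, rfl | rfl⟩ := Nat.even_or_odd' m
  · rw [prod_map_alternatingWord_two_mul, prod_map_alternatingWord_two_mul, ← hz, two_mul,
      pow_add, mul_assoc, hinv, mul_one]
  · rw [prod_map_alternatingWord_two_mul_add_one, prod_map_alternatingWord_two_mul_add_one,
      ← mul_assoc, Algebra.commutes, mul_assoc, ← hz, show 2 * t + 1 = t + 1 + t by ring,
      pow_add, mul_assoc, hinv, mul_one, pow_succ', ← mul_assoc, ← mul_assoc, hi, one_mul]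

end CoxeterSystem

theorem CliffordAlgebra.ι_injective {R V : Type*} [CommRing R] [AddCommGroup V] [Module R V]
    [Invertible (2 : R)] (Q : QuadraticForm R V) : Function.Injective (CliffordAlgebra.ι Q) :=
  fun x y h => (ExteriorAlgebra.ι_inj R x y).1 <| by
    simpa [CliffordAlgebra.changeForm_ι] using congrArg (CliffordAlgebra.equivExterior Q) h

theorem CoxeterSystem.pow_orderOf_mem_of_forall_pow_mem {B W G : Type*} {M : CoxeterMatrix B}
    [Group W] [Group G] (cs : CoxeterSystem M W) (N : Subgroup G) [N.Normal] {f : B → G}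
    (hf : ∀ k l, (f k * f l) ^ M k l ∈ N) (i j : B) :
    (f i * f j) ^ orderOf (cs.simple i * cs.simple j) ∈ N := by
  have hlift : M.IsLiftable (fun b => (f b : G ⧸ N)) := fun k l => by
    rw [← QuotientGroup.mk_mul, ← QuotientGroup.mk_pow, QuotientGroup.eq_one_iff]
    exact hf k l
  rw [← QuotientGroup.eq_one_iff, QuotientGroup.mk_pow, QuotientGroup.mk_mul,
    ← cs.lift_apply_simple hlift i, ← cs.lift_apply_simple hlift j, ← map_mul, ← map_pow,
    pow_orderOf_eq_one, map_one]

namespace CoxeterMatrix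

variable {B : Type*} (M : CoxeterMatrix B)

-- For `M i j = 0`, i.e. `mᵢⱼ = ∞`, the junk value `π / 0 = 0` gives `-cos 0 = -1`, the correct
-- entry of the Tits form.
noncomputable def titsForm : LinearMap.BilinForm ℝ (B →₀ ℝ) :=
  Finsupp.lsum ℝ fun i => LinearMap.toSpanSingleton ℝ _
    (Finsupp.lsum ℝ fun j => LinearMap.toSpanSingleton ℝ ℝ (-cos (π / M i j)))

theorem titsForm_single (i j : B) :
    M.titsForm (Finsupp.single i 1) (Finsupp.single j 1) = -cos (π / M i j) := by
  simp [titsForm, LinearMap.toSpanSingleton_apply]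

noncomputable def titsQuadForm : QuadraticForm ℝ (B →₀ ℝ) :=
  M.titsForm.toQuadraticMap

noncomputable def cliffordGen (b : B) : CliffordAlgebra M.titsQuadForm :=
  CliffordAlgebra.ι _ (Finsupp.single b 1)

theorem cliffordGen_mul_self (b : B) : M.cliffordGen b * M.cliffordGen b = 1 := by
  rw [cliffordGen, CliffordAlgebra.ι_sq_scalar, titsQuadForm,
    LinearMap.BilinMap.toQuadraticMap_apply, titsForm_single, M.diagonal]
  simp

theorem cliffordGen_mul_add_swap (i j : B) :
    M.cliffordGen i * M.cliffordGen j + M.cliffordGen j * M.cliffordGen i =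
      algebraMap ℝ _ (2 * -cos (π / M i j)) := by
  rw [cliffordGen, cliffordGen, CliffordAlgebra.ι_mul_ι_add_swap, titsQuadForm,
    LinearMap.BilinMap.polar_toQuadraticMap, titsForm_single, titsForm_single, M.symmetric j i]
  ring_nf

theorem cliffordGen_mul_mul_self (i j : B) :
    (M.cliffordGen i * M.cliffordGen j) * (M.cliffordGen i * M.cliffordGen j) =
      (2 * -cos (π / M i j)) • (M.cliffordGen i * M.cliffordGen j) - 1 := by
  have hswap := eq_sub_of_add_eq' (M.cliffordGen_mul_add_swap i j)
  calc (M.cliffordGen i * M.cliffordGen j) * (M.cliffordGen i * M.cliffordGen j)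
      = M.cliffordGen i * (M.cliffordGen j * M.cliffordGen i) * M.cliffordGen j := by
        simp only [mul_assoc]
    _ = _ := by
        rw [hswap, mul_sub, sub_mul, ← mul_assoc (M.cliffordGen i) (M.cliffordGen i),
          cliffordGen_mul_self, one_mul, cliffordGen_mul_self, ← Algebra.commutes, mul_assoc,
          Algebra.smul_def]

theorem cliffordGen_mul_pow (i j : B) (h : M i j ≠ 0) :
    (M.cliffordGen i * M.cliffordGen j) ^ M i j = algebraMap ℝ _ ((-1) ^ (M i j + 1)) := by
  by_cases hij : i = j
  · subst hij
    simp [cliffordGen_mul_self]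
  · exact pow_eq_neg_one_pow_of_mul_self_eq (by have := M.off_diagonal i j hij; omega)
      (M.cliffordGen_mul_mul_self i j)

noncomputable def cliffordGenUnit (b : B) : (CliffordAlgebra M.titsQuadForm)ˣ :=
  ⟨M.cliffordGen b, M.cliffordGen b, M.cliffordGen_mul_self b, M.cliffordGen_mul_self b⟩

@[simp]
theorem val_cliffordGenUnit (b : B) :
    (M.cliffordGenUnit b : CliffordAlgebra M.titsQuadForm) = M.cliffordGen b :=
  rfl

noncomputable def cliffordWord (l : List B) : CliffordAlgebra M.titsQuadForm :=
  (l.map M.cliffordGen).prod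

theorem isUnit_cliffordWord (l : List B) : IsUnit (M.cliffordWord l) :=
  List.prod_isUnit fun _ hx => by
    obtain ⟨b, -, rfl⟩ := List.mem_map.1 hx
    exact (M.cliffordGenUnit b).isUnit

theorem cliffordWord_braidMove (u v : List B) {i j : B} (h : M i j ≠ 0) :
    M.cliffordWord (u ++ alternatingWord i j (M i j) ++ v) =
      (-1 : ℝ) ^ (M i j + 1) • M.cliffordWord (u ++ alternatingWord j i (M i j) ++ v) := by
  simp only [cliffordWord, List.map_append, List.prod_append]
  rw [prod_map_alternatingWord_eq_smul (M.cliffordGen_mul_self i) (M.cliffordGen_mul_self j)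
    (M.cliffordGen_mul_pow i j h), mul_smul_comm, smul_mul_assoc]

theorem cliffordGenUnit_mul_pow_mem_center (k l : B) :
    (M.cliffordGenUnit k * M.cliffordGenUnit l) ^ M k l ∈ Subgroup.center _ := by
  by_cases h : M k l = 0
  · rw [h, pow_zero]
    exact Subgroup.one_mem _
  · refine Subgroup.mem_center_iff.2 fun g => Units.ext ?_
    simp only [Units.val_mul, Units.val_pow_eq_pow_val, val_cliffordGenUnit]
    rw [M.cliffordGen_mul_pow k l h, Algebra.commutes]

theorem cliffordGen_mul_sub_mul_cliffordGen (i j : B) :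
    M.cliffordGen i * (M.cliffordGen i * M.cliffordGen j) -
        (M.cliffordGen i * M.cliffordGen j) * M.cliffordGen i =
      CliffordAlgebra.ι _ (Finsupp.single j 2 + Finsupp.single i (2 * cos (π / M i j))) := by
  have hswap := eq_sub_of_add_eq' (M.cliffordGen_mul_add_swap i j)
  rw [← mul_assoc, cliffordGen_mul_self, one_mul, mul_assoc, hswap, mul_sub, ← mul_assoc,
    cliffordGen_mul_self, one_mul, ← Algebra.commutes, ← Algebra.smul_def, map_add,
    ← Finsupp.smul_single_one, ← Finsupp.smul_single_one i, map_smul, map_smul]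
  simp only [cliffordGen]
  module

end CoxeterMatrix

theorem CoxeterSystem.coxeterMatrix_ne_zero {B W : Type*} {M : CoxeterMatrix B} [Group W]
    [Finite W] (cs : CoxeterSystem M W) (i j : B) : M i j ≠ 0 := by
  intro h0
  have hij : i ≠ j := by
    rintro rfl
    simp at h0
  obtain ⟨n, hn⟩ := Nat.exists_eq_succ_of_ne_zero (orderOf_pos (cs.simple i * cs.simple j)).ne'
  have hcentral := cs.pow_orderOf_mem_of_forall_pow_mem _ M.cliffordGenUnit_mul_pow_mem_center i j
  rw [hn] at hcentral
  have hcomm := congrArg Units.val (Subgroup.mem_center_iff.1 hcentral (M.cliffordGenUnit i))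
  simp only [Units.val_mul, Units.val_pow_eq_pow_val, CoxeterMatrix.val_cliffordGenUnit] at hcomm
  have hx : (M.cliffordGen i * M.cliffordGen j) * (M.cliffordGen i * M.cliffordGen j) =
      (2 * -1 : ℝ) • (M.cliffordGen i * M.cliffordGen j) - 1 := by
    simpa [h0] using M.cliffordGen_mul_mul_self i j
  have hcommutator := mul_pow_succ_sub_pow_succ_mul_of_mul_self_eq hx (M.cliffordGen i) n
  rw [hcomm, sub_self, M.cliffordGen_mul_sub_mul_cliffordGen, U_eval_neg_one, h0] at hcommutator
  rcases smul_eq_zero.1 hcommutator.symm with h | h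
  · have : (n : ℝ) + 1 ≠ 0 := by positivity
    simp_all
  · rw [← map_zero (CliffordAlgebra.ι _)] at h
    simpa [Finsupp.single_apply, hij] using DFunLike.congr_fun (CliffordAlgebra.ι_injective _ h) j

theorem eq_prod_range_smul_of_eq_smul_succ {R X : Type*} [CommMonoid R] [MulAction R X]
    {x : ℕ → X} {r : ℕ → R} {n : ℕ} (h : ∀ k < n, x k = r k • x (k + 1)) :
    x 0 = (∏ k ∈ Finset.range n, r k) • x n := by
  induction n with
  | zero => simp
  | succ n ih =>
    rw [ih fun k hk => h k (by omega), h n (by omega), Finset.prod_range_succ, mul_smul]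

theorem prod_neg_one_pow_add_one {R ι : Type*} [CommMonoid R] [HasDistribNeg R] (s : Finset ι)
    (m : ι → ℕ) : ∏ k ∈ s, (-1 : R) ^ (m k + 1) = (-1) ^ (s.filter fun k => Even (m k)).card := by
  rw [← Finset.prod_const, Finset.prod_filter]
  refine Finset.prod_congr rfl fun k _ => ?_
  split_ifs with hk
  · exact hk.add_one.neg_one_pow
  · exact (Nat.not_even_iff_odd.1 hk).add_one.neg_one_pow

theorem eq_one_of_smul_eq_self {K A : Type*} [Field K] [Ring A] [Nontrivial A] [Algebra K A]
    {x : A} (hx : IsUnit x) {r : K} (h : r • x = x) : r = 1 := by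
  rw [Algebra.smul_def, hx.mul_eq_right] at h
  exact (algebraMap K A).injective (h.trans (map_one _).symm)

theorem loop_even_number_of_even_braid_moves_general {B : Type*} (M : CoxeterMatrix B) {W : Type*}
    [Group W] [Finite W] (cs : CoxeterSystem M W)
    (n : ℕ) (path : ℕ → List B) (i j : ℕ → B)
    (hstep : ∀ k < n, ∃ u v : List B,
      path k = u ++ CoxeterSystem.alternatingWord (i k) (j k) (M (i k) (j k)) ++ v ∧
      path (k + 1) = u ++ CoxeterSystem.alternatingWord (j k) (i k) (M (i k) (j k)) ++ v)
    (hloop : path n = path 0) :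
    Even ((Finset.range n).filter (fun k => Even (M (i k) (j k)))).card := by
  have hsign : ∀ k < n, M.cliffordWord (path k) =
      (-1 : ℝ) ^ (M (i k) (j k) + 1) • M.cliffordWord (path (k + 1)) := by
    intro k hk
    obtain ⟨u, v, hk₀, hk₁⟩ := hstep k hk
    rw [hk₀, hk₁]
    exact M.cliffordWord_braidMove u v (cs.coxeterMatrix_ne_zero _ _)
  have hloop_sign := eq_prod_range_smul_of_eq_smul_succ hsign
  rw [hloop, prod_neg_one_pow_add_one] at hloop_sign
  exact (neg_one_pow_eq_one_iff_even (by norm_num)).1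
    (eq_one_of_smul_eq_self (M.isUnit_cliffordWord _) hloop_sign.symm)

/-- In a finite Coxeter group, any closed loop in the graph of reduced words of `w`
(with edges given by braid moves) contains an even number of edges corresponding to
even braid relations, i.e. braid relations `m i j` with `m i j` even. -/
theorem loop_even_number_of_even_braid_moves {B : Type*} (M : CoxeterMatrix B) {W : Type*}
    [Group W] [Finite W] (cs : CoxeterSystem M W) (w : W)
    (n : ℕ) (path : ℕ → List B) (i j : ℕ → B)
    (hvert : ∀ k ≤ n, cs.wordProd (path k) = w ∧ cs.IsReduced (path k))
    (hstep : ∀ k < n, ∃ u v : List B,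
      path k = u ++ CoxeterSystem.alternatingWord (i k) (j k) (M (i k) (j k)) ++ v ∧
      path (k + 1) = u ++ CoxeterSystem.alternatingWord (j k) (i k) (M (i k) (j k)) ++ v)
    (hloop : path n = path 0) :
    Even ((Finset.range n).filter (fun k => Even (M (i k) (j k)))).card :=
  loop_even_number_of_even_braid_moves_general M cs n path i j hstep hloop
end

section
/- Let m ≥ 2 and consider the 2×2 matrices E_i = [[−m+i, 1, m−i],[m−i, 0, −m+i+1]] for i = 1,…,m−2 stacked with a last row (−1,1,1) to form the block of a Gale dual matrix in type A₂. Then the 3×(2m) counting matrix D of type A₂ (with columns (1, m−j+1, 0)ᵀ for the j-th s₁ and (0, j, 1)ᵀ for the j-th s₂) satisfies D · M₁₂,ₘᵀ = 0, where M₁₂,ₘ = [−I_{2m−3} | C] and C is the (2m−3)×3 matrix whose rows are, in order, the two rows of E₁, then E₂, …, E_{m−2}, followed by the row (−1,1,1). -/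
open Matrix

/-- The type `A₂` counting matrix `D` for `c = (s₁, s₂)`: the column at 0-indexed
position `j` of `(s₁s₂)^m` is `(1, m − t + 1, 0)ᵀ` for the `t`-th copy of `s₁`
(even `j`, `t = j/2 + 1`) and `(0, t, 1)ᵀ` for the `t`-th copy of `s₂` (odd `j`). -/
noncomputable def countingD (m : ℕ) : Matrix (Fin 3) (Fin (2 * m)) ℝ :=
  Matrix.of fun r j =>
    if (j : ℕ) % 2 = 0 then ![1, (m : ℝ) - (((j : ℕ) / 2 : ℕ) : ℝ), 0] r
    else ![0, (((j : ℕ) / 2 : ℕ) : ℝ) + 1, 1] r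

/-- Entry in column `c ∈ {0,1,2}` of the last three columns of the Gale dual matrix
`M₁₂,ₘ`, in row `k`: rows `2(i−1)` and `2(i−1)+1` are the rows `(−m+i, 1, m−i)` and
`(m−i, 0, −m+i+1)` of the block `E_i` for `i = 1, …, m−2`, and the last row
(`k = 2m−4`) is `(−1, 1, 1)`. -/
noncomputable def galeLast (m k c : ℕ) : ℝ :=
  if k = 2 * m - 4 then (if c = 0 then -1 else 1)
  else if k % 2 = 0 then
    (if c = 0 then ((k / 2 : ℕ) : ℝ) + 1 - m
     else if c = 1 then 1 else (m : ℝ) - (((k / 2 : ℕ) : ℝ) + 1))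
  else
    (if c = 0 then (m : ℝ) - (((k / 2 : ℕ) : ℝ) + 1)
     else if c = 1 then 0 else ((k / 2 : ℕ) : ℝ) + 1 - m + 1)

/-- The Gale dual matrix `M₁₂,ₘ = [−I_{2m−3} | C]` of type `A₂`. -/
noncomputable def galeM (m : ℕ) : Matrix (Fin (2 * m - 3)) (Fin (2 * m)) ℝ :=
  Matrix.of fun k j =>
    if (j : ℕ) = (k : ℕ) then -1
    else if (j : ℕ) < 2 * m - 3 then 0
    else galeLast m (k : ℕ) ((j : ℕ) - (2 * m - 3))

set_option maxHeartbeats 2000000 in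
/-- Each row of the Gale dual matrix `M₁₂,ₘ` lies in the kernel of the type `A₂`
counting matrix `D`: `D · M₁₂,ₘᵀ = 0`. -/
theorem countingD_mul_galeM_transpose (m : ℕ) (hm : 2 ≤ m) :
    countingD m * (galeM m)ᵀ = 0 := by
  ext r k
  simp only [Matrix.mul_apply, Matrix.transpose_apply, Matrix.zero_apply]
  have hk3 : (k : ℕ) < 2 * m - 3 := k.isLt
  have hm4 : 4 ≤ 2 * m := by omega
  set f : Fin (2 * m) → ℝ := fun j => countingD m r j * galeM m k j with hf
  set k' : Fin (2 * m) := ⟨(k : ℕ), by omega⟩ with hk'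
  set a : Fin (2 * m) := ⟨2 * m - 3, by omega⟩ with ha
  set b : Fin (2 * m) := ⟨2 * m - 2, by omega⟩ with hb
  set c : Fin (2 * m) := ⟨2 * m - 1, by omega⟩ with hc
  have hsum : ∑ j, f j = f k' + f a + f b + f c := by
    have h1 : ∑ j ∈ ({k', a, b, c} : Finset (Fin (2 * m))), f j
        = f k' + f a + f b + f c := by
      rw [Finset.sum_insert (by simp [hk', ha, hb, hc, Fin.ext_iff]; omega),
          Finset.sum_insert (by simp [ha, hb, hc, Fin.ext_iff]; omega),
          Finset.sum_insert (by simp [hb, hc, Fin.ext_iff]; omega),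
          Finset.sum_singleton]
      ring
    rw [← h1]
    refine (Finset.sum_subset (Finset.subset_univ _) ?_).symm
    intro j _ hj
    simp only [Finset.mem_insert, Finset.mem_singleton, Fin.ext_iff, hk', ha, hb, hc] at hj
    push_neg at hj
    have hj3 : (j : ℕ) < 2 * m - 3 := by have := j.isLt; omega
    have hz : galeM m k j = 0 := by
      simp [galeM, hj.1, hj3]
    simp [hf, hz]
  rw [hsum]
  -- evaluate the galeM factors
  have gk : galeM m k k' = -1 := by simp [galeM, hk']
  have ga : galeM m k a = galeLast m k 0 := by
    simp only [galeM, ha, Matrix.of_apply]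
    rw [if_neg (by omega), if_neg (by omega)]
    congr 1
    omega
  have gb : galeM m k b = galeLast m k 1 := by
    simp only [galeM, hb, Matrix.of_apply]
    rw [if_neg (by omega), if_neg (by omega)]
    congr 1
    omega
  have gc : galeM m k c = galeLast m k 2 := by
    simp only [galeM, hc, Matrix.of_apply]
    rw [if_neg (by omega), if_neg (by omega)]
    congr 1
    omega
  -- evaluate the countingD factors at the last three columns
  have hma : (2 * m - 3) % 2 = 1 := by omega
  have hmb : (2 * m - 2) % 2 = 0 := by omega
  have hmc : (2 * m - 1) % 2 = 1 := by omega
  have hda : (2 * m - 3) / 2 = m - 2 := by omega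
  have hdb : (2 * m - 2) / 2 = m - 1 := by omega
  have hdc : (2 * m - 1) / 2 = m - 1 := by omega
  have cm2 : ((m - 2 : ℕ) : ℝ) = (m : ℝ) - 2 := by
    push_cast [Nat.cast_sub hm]; ring
  have cm1 : ((m - 1 : ℕ) : ℝ) = (m : ℝ) - 1 := by
    have : 1 ≤ m := by omega
    push_cast [Nat.cast_sub this]; ring
  have Da : countingD m r a = ![0, (m : ℝ) - 1, 1] r := by
    simp only [countingD, ha, Matrix.of_apply, hma, hda]
    norm_num
    fin_cases r <;> simp [cm2] <;> try ring
  have Db : countingD m r b = ![1, 1, 0] r := by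
    simp only [countingD, hb, Matrix.of_apply, hmb, hdb]
    norm_num
    fin_cases r <;> simp [cm1] <;> try ring
  have Dc : countingD m r c = ![0, (m : ℝ), 1] r := by
    simp only [countingD, hc, Matrix.of_apply, hmc, hdc]
    norm_num
    fin_cases r <;> simp [cm1] <;> try ring
  simp only [hf, gk, ga, gb, gc, Da, Db, Dc]
  obtain ⟨x, hx⟩ : ∃ x : ℝ, (((k : ℕ) / 2 : ℕ) : ℝ) = x := ⟨_, rfl⟩
  -- the galeLast values, together with the parity of the row index
  have hgale : ((k : ℕ) % 2 = 0 ∧ galeLast m k 0 = x + 1 - m ∧ galeLast m k 1 = 1 ∧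
      galeLast m k 2 = (m : ℝ) - (x + 1)) ∨
      ((k : ℕ) % 2 = 1 ∧ galeLast m k 0 = (m : ℝ) - (x + 1) ∧ galeLast m k 1 = 0 ∧
      galeLast m k 2 = x + 1 - m + 1) := by
    by_cases h4 : (k : ℕ) = 2 * m - 4
    · have hx2 : x = (m : ℝ) - 2 := by
        have h := hx
        rw [h4, show (2 * m - 4) / 2 = m - 2 by omega, cm2] at h
        exact h.symm
      refine Or.inl ⟨by omega, ?_, ?_, ?_⟩ <;> simp [galeLast, h4, hx2] <;> ring
    · rcases Nat.even_or_odd (k : ℕ) with he | ho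
      · have he' : (k : ℕ) % 2 = 0 := Nat.even_iff.mp he
        exact Or.inl ⟨he', by simp [galeLast, h4, he', hx], by simp [galeLast, h4, he'],
          by simp [galeLast, h4, he', hx]⟩
      · have ho' : (k : ℕ) % 2 = 1 := Nat.odd_iff.mp ho
        exact Or.inr ⟨ho', by simp [galeLast, h4, ho', hx], by simp [galeLast, h4, ho'],
          by simp [galeLast, h4, ho', hx]⟩
  have Dk : countingD m r k' = ![1, (m : ℝ) - x, 0] r ∧ (k : ℕ) % 2 = 0 ∨
      countingD m r k' = ![0, x + 1, 1] r ∧ (k : ℕ) % 2 = 1 := by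
    rcases Nat.even_or_odd (k : ℕ) with he | ho
    · have he' : (k : ℕ) % 2 = 0 := Nat.even_iff.mp he
      exact Or.inl ⟨by simp [countingD, hk', he', hx], he'⟩
    · have ho' : (k : ℕ) % 2 = 1 := Nat.odd_iff.mp ho
      exact Or.inr ⟨by simp [countingD, hk', ho', hx], ho'⟩
  rcases hgale with ⟨hp, g0, g1, g2⟩ | ⟨hp, g0, g1, g2⟩ <;>
    rcases Dk with ⟨hD, hpar⟩ | ⟨hD, hpar⟩ <;>
      [skip; omega; omega; skip] <;>
        rw [g0, g1, g2, hD] <;> fin_cases r <;> simp <;> ring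
end
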